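/- arXiv:2403.19954 — 4 statements merged into one kernel-verified Lean document; each statement's English description precedes it below -/
import Mathlib

section
/- Let ℓ ≥ 0 be an integer and let M be an integer with M ≥ 2^ℓ. Then (2^ℓ/M) · (1 + ∑_{ζ ∈ ℤ, ζ ≠ 0} (sin(πζ·2^ℓ/M)/(πζ·2^ℓ/M))²) ≤ 6. -/
/-!
For `0 < x ≤ 1` one has `∑_{n ∈ ℤ} sinc² (π n x) = 1 / x`: writing `sin² y = (1 - cos 2y) / 2`
reduces this to `ζ(2) = π² / 6` and the Fourier series `∑ cos (2π n x) / n² = π² B₂(x)` of the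
second Bernoulli polynomial. With `x = 2^ℓ / M` the bracket in the theorem is therefore exactly
`M / 2^ℓ`, and the left-hand side equals `1`.
-/

open Real

lemma Real.sinc_sq_of_ne_zero {y : ℝ} (hy : y ≠ 0) :
    sinc y ^ 2 = (1 - cos (2 * y)) / (2 * y ^ 2) := by
  rw [sinc_of_ne_zero hy, div_pow, cos_two_mul, cos_sq']
  field_simp
  ring

lemma hasSum_one_div_sq_sub_cos_div {x : ℝ} (hx₀ : 0 < x) (hx₁ : x ≤ 1) :
    HasSum (fun n : ℕ => (1 / (n : ℝ) ^ 2 - 1 / (n : ℝ) ^ (2 * 1) * cos (2 * π * n * x))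
      / (2 * π ^ 2 * x ^ 2)) ((1 - x) / (2 * x)) := by
  have hcos := hasSum_one_div_nat_pow_mul_cos (k := 1) one_ne_zero ⟨hx₀.le, hx₁⟩
  have hval : (π ^ 2 / 6 - (-1 : ℝ) ^ (1 + 1) * (2 * π) ^ (2 * 1) / 2 / (2 * 1).factorial *
      bernoulliFun (2 * 1) x) / (2 * π ^ 2 * x ^ 2) = (1 - x) / (2 * x) := by
    norm_num [bernoulliFun_two]
    field_simp
    ring
  exact hval ▸ (hasSum_zeta_two.sub hcos).div_const (2 * π ^ 2 * x ^ 2)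

lemma hasSum_sinc_sq_nat_succ {x : ℝ} (hx₀ : 0 < x) (hx₁ : x ≤ 1) :
    HasSum (fun n : ℕ => sinc (π * (n + 1 : ℕ) * x) ^ 2) ((1 - x) / (2 * x)) := by
  have h := (hasSum_nat_add_iff' 1).mpr (hasSum_one_div_sq_sub_cos_div hx₀ hx₁)
  simp only [Finset.sum_range_one, Nat.cast_zero, mul_one, zero_pow two_ne_zero, div_zero, zero_mul,
    sub_self, zero_div, sub_zero] at h
  refine h.congr_fun fun n => ?_
  rw [sinc_sq_of_ne_zero (by positivity)]
  field_simp

lemma hasSum_sinc_sq_int {x : ℝ} (hx₀ : 0 < x) (hx₁ : x ≤ 1) :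
    HasSum (fun n : ℤ => sinc (π * n * x) ^ 2) x⁻¹ := by
  set f : ℤ → ℝ := fun n => sinc (π * n * x) ^ 2
  have h := hasSum_sinc_sq_nat_succ hx₀ hx₁
  have hpos : HasSum (fun n : ℕ => f (n + 1)) ((1 - x) / (2 * x)) :=
    h.congr_fun fun n => by simp [f]
  have hneg : HasSum (fun n : ℕ => f (-(n + 1))) ((1 - x) / (2 * x)) := by
    refine h.congr_fun fun n => ?_
    rw [← sinc_neg]
    simp only [f]
    push_cast
    ring_nf
  have hval : (1 - x) / (2 * x) + f 0 + (1 - x) / (2 * x) = x⁻¹ := by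
    simp only [f, Int.cast_zero, mul_zero, zero_mul, sinc_zero, one_pow]
    field_simp
    ring
  exact hval ▸ hpos.of_add_one_of_neg_add_one hneg

lemma hasSum_sin_div_sq_int_ne_zero {x : ℝ} (hx₀ : 0 < x) (hx₁ : x ≤ 1) :
    HasSum (fun n : {n : ℤ // n ≠ 0} => (sin (π * n * x) / (π * n * x)) ^ 2) (x⁻¹ - 1) := by
  set f : ℤ → ℝ := fun n => sinc (π * n * x) ^ 2
  have h := ((hasSum_singleton 0 f).hasSum_iff_compl (f := f)).mp (hasSum_sinc_sq_int hx₀ hx₁)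
  have hf₀ : f 0 = 1 := by simp [f]
  rw [hf₀] at h
  refine h.congr_fun fun ⟨n, hn⟩ => ?_
  have hn' : (n : ℝ) ≠ 0 := by exact_mod_cast hn
  simp only [Function.comp_apply, f]
  rw [sinc_of_ne_zero (by positivity)]

/-- For integers `ℓ ≥ 0` and `M ≥ 2^ℓ`,
`(2^ℓ/M)(1 + ∑_{ζ ≠ 0} (sin(πζ2^ℓ/M)/(πζ2^ℓ/M))²) ≤ 6`. -/
theorem sinc_sum_bound (ℓ M : ℕ) (hM : 2 ^ ℓ ≤ M) :
    (2:ℝ)^ℓ / M *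
      (1 + ∑' ζ : {ζ : ℤ // ζ ≠ 0},
        (Real.sin (Real.pi * ((ζ : ℤ) : ℝ) * ((2:ℝ)^ℓ / M)) /
          (Real.pi * ((ζ : ℤ) : ℝ) * ((2:ℝ)^ℓ / M))) ^ 2) ≤ 6 := by
  have hM₀ : (0 : ℝ) < M := by exact_mod_cast (Nat.two_pow_pos ℓ).trans_le hM
  have hx₀ : (0 : ℝ) < 2 ^ ℓ / M := by positivity
  have hx₁ : (2 : ℝ) ^ ℓ / M ≤ 1 := by
    rw [div_le_one hM₀]
    exact_mod_cast hM
  rw [(hasSum_sin_div_sq_int_ne_zero hx₀ hx₁).tsum_eq, add_sub_cancel, mul_inv_cancel₀ hx₀.ne']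
  norm_num
end

section
/- Fix an integer ℓ ≥ 0 and an integer N ≥ 2^{ℓ+2}. Let j be an integer with 1 ≤ |j| ≤ N/2^{ℓ+2}, and let α ∈ [2^ℓ/N, 2^{ℓ+1}/N). Then |e^{2πi j K(α) α} − 1| ≤ |e^{2πi j α} − 1|, and consequently E(j; N) ≤ 2^ℓ/N. -/
open MeasureTheory

/-- `e t = exp(2πit)`. -/
noncomputable def e (t : ℝ) : ℂ := Complex.exp (2 * Real.pi * Complex.I * t)

/-- For `0 < α ≤ 1`, `K α` is the unique positive integer with `(K α - 1) α < 1 ≤ K α · α`. -/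
noncomputable def K (α : ℝ) : ℕ := ⌈1 / α⌉₊

/-- `E(j; N) = ∫_{2^ℓ/N}^{2^(ℓ+1)/N} |∑_{k=0}^{K(α)-1} e^(2πijkα)|² dα`. -/
noncomputable def E (ℓ N : ℕ) (j : ℤ) : ℝ :=
  ∫ α in ((2:ℝ)^ℓ / N)..((2:ℝ)^(ℓ+1) / N),
    ‖∑ k ∈ Finset.range (K α), e ((j : ℝ) * ((k : ℝ) * α))‖ ^ 2

/-!
Write `K(α) α = 1 + θ` with `0 ≤ θ < α`. Since `j` is an integer, `e(j K(α) α) = e(j θ)`, and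
`t ↦ |e(t) - 1| = 2 sin(π |t|)` is increasing in `|t|` on `[-1/2, 1/2]`; as `|j θ| ≤ |j α| ≤ 1/2`
this gives the first inequality. Summing the geometric series,
`|∑_{k<K(α)} e(jkα)| = |e(j K(α) α) - 1| / |e(jα) - 1| ≤ 1`, so the integrand of `E(j; N)` is at
most `1` on an interval of length `2^ℓ/N`.
-/

open Real Finset

lemma e_add_int (t : ℝ) (n : ℤ) : e (t + n) = e t := by
  rw [e, e, show 2 * π * Complex.I * ((t + n : ℝ) : ℂ)
      = 2 * π * Complex.I * t + n * (2 * π * Complex.I) by push_cast; ring,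
    Complex.exp_add, Complex.exp_int_mul_two_pi_mul_I, mul_one]

lemma e_nat_mul (k : ℕ) (t : ℝ) : e (k * t) = e t ^ k := by
  rw [e, e, ← Complex.exp_nat_mul]
  congr 1
  push_cast
  ring

lemma norm_e_sub_one_of_abs_le_one {t : ℝ} (ht : |t| ≤ 1) : ‖e t - 1‖ = 2 * sin (π * |t|) := by
  have hexp : e t = Complex.exp (Complex.I * ((2 * π * t : ℝ) : ℂ)) := by
    rw [e]; push_cast; ring_nf
  have hπt : |π * t| ≤ π := by
    rw [abs_mul, abs_of_pos pi_pos]; nlinarith [pi_pos]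
  rw [hexp, Complex.norm_exp_I_mul_ofReal_sub_one, norm_mul, Real.norm_eq_abs,
    Real.norm_eq_abs, abs_two, show 2 * π * t / 2 = π * t by ring,
    abs_sin_eq_sin_abs_of_abs_le_pi hπt, abs_mul, abs_of_pos pi_pos]

lemma norm_e_sub_one_le_of_abs_le {s t : ℝ} (hst : |s| ≤ |t|) (ht : |t| ≤ 1 / 2) :
    ‖e s - 1‖ ≤ ‖e t - 1‖ := by
  rw [norm_e_sub_one_of_abs_le_one (by linarith), norm_e_sub_one_of_abs_le_one (by linarith)]
  gcongr 2 * ?_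
  apply sin_le_sin_of_le_of_le_pi_div_two
  · nlinarith [pi_pos, abs_nonneg s]
  · nlinarith [pi_pos]
  · exact mul_le_mul_of_nonneg_left hst pi_pos.le

lemma e_ne_one {t : ℝ} (ht₀ : t ≠ 0) (ht₁ : |t| < 1) : e t ≠ 1 := by
  rw [← sub_ne_zero, ← norm_ne_zero_iff, norm_e_sub_one_of_abs_le_one ht₁.le]
  have := sin_pos_of_pos_of_lt_pi (mul_pos pi_pos (abs_pos.2 ht₀))
    (by nlinarith [pi_pos] : π * |t| < π)
  positivity

lemma K_mul_sub_one_mem_Ico {α : ℝ} (hα : 0 < α) : (K α : ℝ) * α - 1 ∈ Set.Ico 0 α := by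
  have hle : 1 / α ≤ K α := Nat.le_ceil _
  have hlt : (K α : ℝ) < 1 / α + 1 := Nat.ceil_lt_add_one (by positivity)
  rw [div_le_iff₀ hα] at hle
  have : (K α : ℝ) * α < (1 / α + 1) * α := mul_lt_mul_of_pos_right hlt hα
  rw [add_mul, one_div_mul_cancel hα.ne', one_mul] at this
  constructor <;> linarith

lemma norm_e_mul_K_sub_one_le (j : ℤ) {α : ℝ} (hα : 0 < α) (hjα : |(j : ℝ)| * α ≤ 1 / 2) :
    ‖e (j * K α * α) - 1‖ ≤ ‖e (j * α) - 1‖ := by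
  obtain ⟨hθ₀, hθα⟩ := K_mul_sub_one_mem_Ico hα
  set θ := (K α : ℝ) * α - 1
  have hshift : e (j * K α * α) = e (j * θ) := by
    rw [← e_add_int (j * θ) j]; congr 1; ring
  rw [hshift]
  apply norm_e_sub_one_le_of_abs_le _ (by rwa [abs_mul, abs_of_pos hα])
  rw [abs_mul, abs_mul, abs_of_nonneg hθ₀, abs_of_pos hα]
  exact mul_le_mul_of_nonneg_left hθα.le (abs_nonneg _)

lemma norm_geom_sum_le_one {𝕜 : Type*} [NormedField 𝕜] {x : 𝕜} (hx : x ≠ 1) {n : ℕ}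
    (h : ‖x ^ n - 1‖ ≤ ‖x - 1‖) : ‖∑ k ∈ range n, x ^ k‖ ≤ 1 := by
  rw [geom_sum_eq hx, norm_div, div_le_one (norm_pos_iff.2 (sub_ne_zero.2 hx))]
  exact h

lemma norm_sum_e_le_one {j : ℤ} (hj : j ≠ 0) {α : ℝ} (hα : 0 < α)
    (hjα : |(j : ℝ)| * α ≤ 1 / 2) : ‖∑ k ∈ range (K α), e (j * (k * α))‖ ≤ 1 := by
  have hpow : ∀ k : ℕ, e (j * (k * α)) = e (j * α) ^ k := fun k => by
    rw [← e_nat_mul]; congr 1; ring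
  have hne : e (j * α) ≠ 1 :=
    e_ne_one (mul_ne_zero (Int.cast_ne_zero.2 hj) hα.ne')
      (by rw [abs_mul, abs_of_pos hα]; linarith)
  simp only [hpow]
  refine norm_geom_sum_le_one hne ?_
  rw [← hpow]
  simpa [mul_assoc] using norm_e_mul_K_sub_one_le j hα hjα

lemma E_le_of_norm_sum_le_one {ℓ N : ℕ} {j : ℤ}
    (h : ∀ α ∈ Set.Ioc ((2:ℝ)^ℓ / N) ((2:ℝ)^(ℓ+1) / N),
      ‖∑ k ∈ range (K α), e (j * (k * α))‖ ≤ 1) :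
    E ℓ N j ≤ (2:ℝ)^ℓ / N := by
  have hab : (2:ℝ)^ℓ / N ≤ (2:ℝ)^(ℓ+1) / N := by gcongr <;> norm_num
  have hlen : (2:ℝ)^(ℓ+1) / N - (2:ℝ)^ℓ / N = (2:ℝ)^ℓ / N := by ring
  calc E ℓ N j ≤ ‖E ℓ N j‖ := le_norm_self _
    _ ≤ 1 * |(2:ℝ)^(ℓ+1) / N - (2:ℝ)^ℓ / N| := by
      refine intervalIntegral.norm_integral_le_of_norm_le_const fun α hα => ?_
      rw [Set.uIoc_of_le hab] at hα
      rw [norm_pow, norm_norm]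
      exact pow_le_one₀ (norm_nonneg _) (h α hα)
    _ = (2:ℝ)^ℓ / N := by rw [one_mul, hlen, abs_of_nonneg (by positivity)]

theorem E_bound_small_j_general (ℓ N : ℕ) (j : ℤ)
    (hj1 : 1 ≤ |j|) (hj2 : (|j| : ℝ) ≤ (N : ℝ) / 2 ^ (ℓ + 2))
    (α : ℝ) (hα : α ∈ Set.Ico ((2:ℝ)^ℓ / N) ((2:ℝ)^(ℓ+1) / N)) :
    ‖e ((j : ℝ) * (K α : ℝ) * α) - 1‖ ≤ ‖e ((j : ℝ) * α) - 1‖ ∧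
      E ℓ N j ≤ (2:ℝ)^ℓ / N := by
  have hj : (1 : ℝ) ≤ |(j : ℝ)| := by exact_mod_cast hj1
  have hN : (0 : ℝ) < N := 
    (div_pos_iff_of_pos_right (by positivity : (0 : ℝ) < 2 ^ (ℓ + 2))).1 (by linarith)
  have hsmall : ∀ β ∈ Set.Icc ((2:ℝ)^ℓ / N) ((2:ℝ)^(ℓ+1) / N),
      0 < β ∧ |(j : ℝ)| * β ≤ 1 / 2 := fun β hβ => by
    have hβ₀ : 0 < β := lt_of_lt_of_le (by positivity) hβ.1
    refine ⟨hβ₀, ?_⟩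
    calc |(j : ℝ)| * β ≤ (N : ℝ) / 2 ^ (ℓ + 2) * ((2:ℝ)^(ℓ+1) / N) :=
          mul_le_mul hj2 hβ.2 hβ₀.le (by positivity)
      _ = 1 / 2 := by field_simp; ring
  have hj₀ : j ≠ 0 := abs_pos.1 (by omega)
  obtain ⟨hα₀, hjα⟩ := hsmall α (Set.Ico_subset_Icc_self hα)
  refine ⟨norm_e_mul_K_sub_one_le j hα₀ hjα, E_le_of_norm_sum_le_one fun β hβ => ?_⟩
  obtain ⟨hβ₀, hjβ⟩ := hsmall β (Set.Ioc_subset_Icc_self hβ)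
  exact norm_sum_e_le_one hj₀ hβ₀ hjβ

/-- For small `j`, namely `1 ≤ |j| ≤ N/2^(ℓ+2)`, and `α ∈ [2^ℓ/N, 2^(ℓ+1)/N)`, one has
`|e^(2πijK(α)α) - 1| ≤ |e^(2πijα) - 1|` and consequently `E(j; N) ≤ 2^ℓ/N`. -/
theorem E_bound_small_j (ℓ N : ℕ) (hN : 2 ^ (ℓ + 2) ≤ N) (j : ℤ)
    (hj1 : 1 ≤ |j|) (hj2 : (|j| : ℝ) ≤ (N : ℝ) / 2 ^ (ℓ + 2))
    (α : ℝ) (hα : α ∈ Set.Ico ((2:ℝ)^ℓ / N) ((2:ℝ)^(ℓ+1) / N)) :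
    ‖e ((j : ℝ) * (K α : ℝ) * α) - 1‖ ≤ ‖e ((j : ℝ) * α) - 1‖ ∧
      E ℓ N j ≤ (2:ℝ)^ℓ / N :=
  E_bound_small_j_general ℓ N j hj1 hj2 α hα
end

section
/- Fix an integer ℓ ≥ 0 and an integer N ≥ 2^{ℓ+1}, and let j be an integer with |j| > N/2^{ℓ+2}. Then ∫_{2^ℓ/N}^{2^{ℓ+1}/N} (min{N, 1/‖jα‖})² dα ≤ 2^{ℓ+8}. -/
/-!
Substituting `t = jα` turns the integral into `|j|⁻¹` times the integral of the 1-periodic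
function `f t = min(N, 1/‖t‖)²` over an interval of length `|j| 2^ℓ / N`. Over one period `f`
integrates to at most `4N`: bound it by `N²` on `[-1/N, 1/N]` and by `t⁻²` on the rest of
`[-1/2, 1/2]`. An interval of length `L` thus contributes at most `(L + 1) · 4N`, so the integral
is at most `4 · 2^ℓ + 4N/|j| < 20 · 2^ℓ`.
-/

open MeasureTheory intervalIntegral Function

theorem abs_sub_round_eq_abs_of_abs_le_half {t : ℝ} (ht : |t| ≤ 1 / 2) :
    |t - round t| = |t| := by
  refine le_antisymm (by simpa using round_le t 0) ?_
  rcases eq_or_ne (round t) 0 with h | h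
  · simp [h]
  · have h1 : (1 : ℝ) ≤ |((round t : ℤ) : ℝ)| := by exact_mod_cast Int.one_le_abs h
    have h2 := abs_sub_abs_le_abs_sub ((round t : ℤ) : ℝ) t
    rw [abs_sub_comm] at h2
    linarith

theorem measurable_sub_round : Measurable fun t : ℝ => t - round t := by
  simp only [round_eq]
  exact measurable_id.sub (measurable_from_top.comp (measurable_id.add_const _).floor)

theorem Function.Periodic.intervalIntegral_le_of_nonneg {f : ℝ → ℝ} {T : ℝ} (hf : Periodic f T)
    (hT : 0 < T) (hf0 : 0 ≤ f) (hint : IntervalIntegrable f volume 0 T) {u v : ℝ} (huv : u ≤ v) :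
    ∫ t in u..v, f t ≤ ((v - u) / T + 1) * ∫ t in 0..T, f t := by
  have h_int := hf.intervalIntegrable₀ hT.ne' hint
  set n : ℕ := ⌈(v - u) / T⌉₊
  have hv : v ≤ u + (n : ℤ) • T := by
    have := (div_le_iff₀ hT).mp (Nat.le_ceil ((v - u) / T))
    simp only [zsmul_eq_mul, Int.cast_natCast]
    linarith
  have hn : (n : ℝ) ≤ (v - u) / T + 1 :=
    (Nat.ceil_lt_add_one (div_nonneg (sub_nonneg.mpr huv) hT.le)).le
  calc ∫ t in u..v, f t ≤ ∫ t in u..u + (n : ℤ) • T, f t :=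
        integral_mono_interval le_rfl huv hv (ae_of_all _ hf0) (h_int _ _)
    _ = n * ∫ t in 0..T, f t := by
        rw [hf.intervalIntegral_add_zsmul_eq n u h_int, hf.intervalIntegral_add_eq u 0, zero_add,
          zsmul_eq_mul, Int.cast_natCast]
    _ ≤ ((v - u) / T + 1) * ∫ t in 0..T, f t :=
        mul_le_mul_of_nonneg_right hn (integral_nonneg hT.le fun t _ => hf0 t)

theorem intervalIntegral_comp_mul_le {f : ℝ → ℝ} {K : ℝ}
    (hf : ∀ u v, u ≤ v → ∫ t in u..v, f t ≤ (v - u + 1) * K) {c a b : ℝ} (hc : c ≠ 0)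
    (hab : a ≤ b) : ∫ α in a..b, f (c * α) ≤ (b - a + |c|⁻¹) * K := by
  rw [integral_comp_mul_left f hc, smul_eq_mul]
  rcases hc.lt_or_gt with hneg | hpos
  · have h := hf (c * b) (c * a) (by nlinarith)
    rw [integral_symm, abs_of_neg hneg]
    have hc' : 0 < -c⁻¹ := by simpa using hneg
    calc c⁻¹ * -∫ t in c * b..c * a, f t = -c⁻¹ * ∫ t in c * b..c * a, f t := by ring
      _ ≤ -c⁻¹ * ((c * a - c * b + 1) * K) := mul_le_mul_of_nonneg_left h hc'.le
      _ = (b - a + (-c)⁻¹) * K := by field_simp; ring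
  · have h := hf (c * a) (c * b) (by nlinarith)
    rw [abs_of_pos hpos]
    calc c⁻¹ * ∫ t in c * a..c * b, f t ≤ c⁻¹ * ((c * b - c * a + 1) * K) :=
          mul_le_mul_of_nonneg_left h (inv_nonneg.mpr hpos.le)
      _ = (b - a + c⁻¹) * K := by field_simp

/-- `min(N, 1/‖t‖)²`, where `‖t‖ = |t - round t|` is the distance to the nearest integer. -/
noncomputable def clippedInvDistSq (N t : ℝ) : ℝ :=
  if t - round t = 0 then N ^ 2 else (min N (1 / |t - round t|)) ^ 2

namespace clippedInvDistSq

variable {N : ℝ}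

theorem nonneg (N : ℝ) : 0 ≤ clippedInvDistSq N := fun t => by
  unfold clippedInvDistSq
  split <;> positivity

theorem le_sq (hN : 0 ≤ N) (t : ℝ) : clippedInvDistSq N t ≤ N ^ 2 := by
  unfold clippedInvDistSq
  split
  · exact le_rfl
  · exact pow_le_pow_left₀ (le_min hN (by positivity)) (min_le_left _ _) 2

theorem periodic (N : ℝ) : Periodic (clippedInvDistSq N) 1 := fun t => by
  have h : t + 1 - round (t + 1) = t - round t := by
    rw [round_add_one]; push_cast; ring
  simp only [clippedInvDistSq, h]

theorem measurable (N : ℝ) : Measurable (clippedInvDistSq N) :=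
  Measurable.ite (measurable_sub_round (measurableSet_singleton 0)) measurable_const
    ((measurable_const.min (measurable_const.div measurable_sub_round.abs)).pow_const 2)

theorem intervalIntegrable (hN : 0 ≤ N) (a b : ℝ) :
    IntervalIntegrable (clippedInvDistSq N) volume a b := by
  refine (intervalIntegrable_const (c := N ^ 2)).mono_fun
    (measurable N).aestronglyMeasurable (ae_of_all _ fun t => ?_)
  simpa [abs_of_nonneg (nonneg N t), sq_abs] using le_sq hN t

theorem le_zpow_neg_two (hN : 0 ≤ N) {t : ℝ} (ht0 : t ≠ 0) (ht : |t| ≤ 1 / 2) :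
    clippedInvDistSq N t ≤ t ^ (-2 : ℤ) := by
  have hdist := abs_sub_round_eq_abs_of_abs_le_half ht
  have hne : t - round t ≠ 0 := abs_ne_zero.mp (hdist ▸ abs_ne_zero.mpr ht0)
  unfold clippedInvDistSq
  rw [if_neg hne, hdist]
  calc min N (1 / |t|) ^ 2 ≤ (1 / |t|) ^ 2 :=
        pow_le_pow_left₀ (le_min hN (by positivity)) (min_le_right _ _) 2
    _ = t ^ (-2 : ℤ) := by rw [div_pow, sq_abs, zpow_neg, one_pow, one_div]; norm_cast

theorem integral_le_inv_sub_inv (hN : 0 ≤ N) {a b : ℝ} (hab : a ≤ b) (ha : -(1 / 2) ≤ a)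
    (hb : b ≤ 1 / 2) (h0 : (0 : ℝ) ∉ Set.uIcc a b) :
    ∫ t in a..b, clippedInvDistSq N t ≤ a⁻¹ - b⁻¹ := by
  have hzpow : ∫ t in a..b, t ^ (-2 : ℤ) = a⁻¹ - b⁻¹ := by
    rw [integral_zpow (Or.inr ⟨by norm_num, h0⟩)]
    norm_num
    ring
  refine (integral_mono_on hab (intervalIntegrable hN a b)
    (intervalIntegrable_zpow (Or.inr h0)) fun t ht => ?_).trans_eq hzpow
  refine le_zpow_neg_two hN (fun h => h0 (h ▸ Set.Icc_subset_uIcc ht)) (abs_le.mpr ?_)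
  exact ⟨ha.trans ht.1, ht.2.trans hb⟩

theorem integral_period_le (hN : 2 ≤ N) : ∫ t in (0 : ℝ)..1, clippedInvDistSq N t ≤ 4 * N := by
  have hN0 : 0 < N := by linarith
  have hint := intervalIntegrable hN0.le
  have hNinv : 1 / N ≤ 1 / 2 := one_div_le_one_div_of_le two_pos hN
  have hNinv0 : 0 < 1 / N := by positivity
  have hshift : ∫ t in (0 : ℝ)..1, clippedInvDistSq N t
      = ∫ t in -(1 / 2)..1 / 2, clippedInvDistSq N t := by
    have h := (periodic N).intervalIntegral_add_eq 0 (-(1 / 2))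
    norm_num at h
    exact h
  rw [hshift, ← integral_add_adjacent_intervals (hint (-(1 / 2)) (-(1 / N))) (hint _ _),
    ← integral_add_adjacent_intervals (hint (-(1 / N)) (1 / N)) (hint _ _)]
  have hleft := integral_le_inv_sub_inv hN0.le (neg_le_neg hNinv) le_rfl (by linarith)
    (by rw [Set.mem_uIcc]; intro h; rcases h with h | h <;> linarith)
  have hright := integral_le_inv_sub_inv hN0.le hNinv (by linarith) le_rfl
    (by rw [Set.mem_uIcc]; intro h; rcases h with h | h <;> linarith)
  have hmiddle : ∫ t in -(1 / N)..1 / N, clippedInvDistSq N t ≤ 2 * N := by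
    refine (integral_mono_on (by linarith) (hint _ _) intervalIntegrable_const
      fun t _ => le_sq hN0.le t).trans_eq ?_
    rw [intervalIntegral.integral_const, smul_eq_mul]
    field_simp
    ring
  simp only [inv_neg, one_div, inv_inv] at hleft hright hmiddle ⊢
  linarith

theorem integral_le (hN : 2 ≤ N) {u v : ℝ} (huv : u ≤ v) :
    ∫ t in u..v, clippedInvDistSq N t ≤ (v - u + 1) * (4 * N) := by
  have hN0 : 0 ≤ N := by linarith
  simpa using ((periodic N).intervalIntegral_le_of_nonneg one_pos (nonneg N)
    (intervalIntegrable hN0 0 1) huv).trans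
    (mul_le_mul_of_nonneg_left (integral_period_le hN) (by linarith))

end clippedInvDistSq

/-- For a large frequency `j`, namely `|j| > N/2^(ℓ+2)`, the integral of
`(min{N, 1/‖jα‖})²` over `α ∈ [2^ℓ/N, 2^(ℓ+1)/N]` is at most `2^(ℓ+8)`; here `‖x‖`
denotes the distance from `x` to the nearest integer, and at points where `jα ∈ ℤ`
the integrand is interpreted as `N²`. -/
theorem min_dist_integral_bound (ℓ N : ℕ) (hN : 2 ^ (ℓ + 1) ≤ N) (j : ℤ)
    (hj : (N : ℝ) / 2 ^ (ℓ + 2) < |(j : ℝ)|) :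
    (∫ α in ((2:ℝ)^ℓ / N)..((2:ℝ)^(ℓ+1) / N),
      if (j : ℝ) * α - round ((j : ℝ) * α) = 0 then ((N : ℝ)) ^ 2
      else (min (N : ℝ) (1 / |(j : ℝ) * α - round ((j : ℝ) * α)|)) ^ 2)
      ≤ 2 ^ (ℓ + 8) := by
  have hN2 : (2 : ℝ) ≤ N := by
    exact_mod_cast (Nat.le_self_pow (by omega) 2).trans hN
  have hN0 : (0 : ℝ) < N := by linarith
  have hj0 : 0 < |(j : ℝ)| := lt_of_le_of_lt (by positivity) hj
  have hNj : (N : ℝ) * |(j : ℝ)|⁻¹ < 2 ^ (ℓ + 2) := by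
    rwa [← div_eq_mul_inv, div_lt_iff₀ hj0, mul_comm, ← div_lt_iff₀ (by positivity)]
  calc _ = ∫ α in ((2:ℝ)^ℓ / N)..((2:ℝ)^(ℓ+1) / N), clippedInvDistSq N (j * α) := rfl
    _ ≤ ((2:ℝ)^(ℓ+1) / N - 2^ℓ / N + |(j : ℝ)|⁻¹) * (4 * N) :=
        intervalIntegral_comp_mul_le (fun _ _ => clippedInvDistSq.integral_le hN2)
          (abs_pos.mp hj0) (by gcongr <;> norm_num)
    _ = 4 * 2 ^ ℓ + 4 * (N * |(j : ℝ)|⁻¹) := by field_simp; ring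
    _ ≤ 2 ^ (ℓ + 8) := by rw [pow_add] at hNj ⊢; nlinarith [pow_pos (two_pos : (0 : ℝ) < 2) ℓ]
end

section
/- Fix an integer ℓ ≥ 0 and an integer N ≥ 2^{ℓ+1}, and let j be an integer with |j| > N/2^{ℓ+2}. Then the number of integers r such that the open interval (r/j − 1/(|j|N), r/j + 1/(|j|N)) has nonempty intersection with [2^ℓ/N, 2^{ℓ+1}/N) is at most 2^{ℓ+5}|j|/N. -/
open MeasureTheory

/-- For `|j| > N/2^(ℓ+2)`, the number of integers `r` such that the interval
`(r/j - 1/(|j|N), r/j + 1/(|j|N))` meets `[2^ℓ/N, 2^(ℓ+1)/N)` is at most `2^(ℓ+5)|j|/N`. -/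
theorem count_close_rationals (ℓ N : ℕ) (hN : 2 ^ (ℓ + 1) ≤ N) (j : ℤ)
    (hj : (N : ℝ) / 2 ^ (ℓ + 2) < |(j : ℝ)|) :
    (Nat.card {r : ℤ |
        (Set.Ioo ((r : ℝ) / (j : ℝ) - 1 / (|(j : ℝ)| * N))
            ((r : ℝ) / (j : ℝ) + 1 / (|(j : ℝ)| * N)) ∩
          Set.Ico ((2:ℝ)^ℓ / N) ((2:ℝ)^(ℓ+1) / N)).Nonempty} : ℝ)
      ≤ 2 ^ (ℓ + 5) * |(j : ℝ)| / N := by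
  have h21 : (2:ℕ) ≤ 2 ^ (ℓ + 1) := by
    calc (2:ℕ) = 2 ^ 1 := rfl
      _ ≤ 2 ^ (ℓ + 1) := Nat.pow_le_pow_right (by norm_num) (by omega)
  have hN2 : (2:ℕ) ≤ N := le_trans h21 hN
  have hN0 : (0:ℝ) < N := by exact_mod_cast lt_of_lt_of_le (by norm_num) hN2
  have hN2' : (2:ℝ) ≤ N := by exact_mod_cast hN2
  have hjabs : (0:ℝ) < |(j:ℝ)| := lt_of_le_of_lt (by positivity) hj
  have hj0 : (j:ℝ) ≠ 0 := by
    intro h; rw [h] at hjabs; simp at hjabs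
  set B' : ℝ := (2:ℝ)^(ℓ+1)/N + 1 / (|(j:ℝ)| * N) with hB'
  have hB'0 : 0 < B' := by positivity
  set M : ℤ := ⌊|(j:ℝ)| * B'⌋ with hM
  have hM0 : 0 ≤ M := Int.floor_nonneg.mpr (by positivity)
  have hsub : {r : ℤ |
        (Set.Ioo ((r : ℝ) / (j : ℝ) - 1 / (|(j : ℝ)| * N))
            ((r : ℝ) / (j : ℝ) + 1 / (|(j : ℝ)| * N)) ∩
          Set.Ico ((2:ℝ)^ℓ / N) ((2:ℝ)^(ℓ+1) / N)).Nonempty} ⊆ Set.Icc (-M) M := by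
    rintro r ⟨x, hx1, hx2⟩
    have hxa := hx1.1
    have hxb := hx1.2
    have hxc := hx2.1
    have hxd := hx2.2
    have hA0 : (0:ℝ) ≤ (2:ℝ)^ℓ / N := by positivity
    have h1 : (r:ℝ)/j < B' := by rw [hB']; linarith
    have h2 : -B' < (r:ℝ)/j := by rw [hB']; linarith
    have habs : |(r:ℝ)| ≤ |(j:ℝ)| * B' := by
      have h3 : |(r:ℝ)/j| ≤ B' := abs_le.mpr ⟨le_of_lt h2, le_of_lt h1⟩
      rw [abs_div] at h3
      calc |(r:ℝ)| = |(r:ℝ)| / |(j:ℝ)| * |(j:ℝ)| := by field_simp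
        _ ≤ B' * |(j:ℝ)| := mul_le_mul_of_nonneg_right h3 (abs_nonneg _)
        _ = |(j:ℝ)| * B' := by ring
    have hle : (r:ℝ) ≤ |(j:ℝ)| * B' := le_trans (le_abs_self _) habs
    have hge : -(|(j:ℝ)| * B') ≤ (r:ℝ) := neg_le_of_abs_le habs
    constructor
    · have h4 : ((-r : ℤ) : ℝ) ≤ |(j:ℝ)| * B' := by push_cast; linarith
      have h5 : -r ≤ M := Int.le_floor.mpr h4
      omega
    · exact Int.le_floor.mpr hle
  have hfin : (Set.Icc (-M) M : Set ℤ).Finite := Set.finite_Icc _ _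
  have hcard : Nat.card {r : ℤ |
        (Set.Ioo ((r : ℝ) / (j : ℝ) - 1 / (|(j : ℝ)| * N))
            ((r : ℝ) / (j : ℝ) + 1 / (|(j : ℝ)| * N)) ∩
          Set.Ico ((2:ℝ)^ℓ / N) ((2:ℝ)^(ℓ+1) / N)).Nonempty}
      ≤ Nat.card (Set.Icc (-M) M : Set ℤ) := Nat.card_mono hfin hsub
  have hMle : (M:ℝ) ≤ |(j:ℝ)| * B' := Int.floor_le _
  have hIcc : (Nat.card (Set.Icc (-M) M : Set ℤ) : ℝ) ≤ 2 * (|(j:ℝ)| * B') + 1 := by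
    have h1 : Nat.card (Set.Icc (-M) M : Set ℤ) = (M + 1 - (-M)).toNat := by
      rw [Nat.card_coe_set_eq, ← Finset.coe_Icc, Set.ncard_coe_finset, Int.card_Icc]
    rw [h1]
    have h2 : (((M + 1 - (-M)).toNat : ℤ) : ℝ) = ((M + 1 - (-M) : ℤ) : ℝ) := by
      rw [Int.toNat_of_nonneg (by omega)]
    push_cast at h2 ⊢
    linarith
  have hkey : (N:ℝ) < 2^(ℓ+2) * |(j:ℝ)| := by
    rw [div_lt_iff₀ (by positivity)] at hj
    linarith
  have hfinal : 2 * (|(j:ℝ)| * B') + 1 ≤ 2 ^ (ℓ + 5) * |(j : ℝ)| / N := by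
    rw [le_div_iff₀ hN0, hB']
    have hexpand : (2 * (|(j:ℝ)| * ((2:ℝ)^(ℓ+1)/N + 1 / (|(j:ℝ)| * N))) + 1) * N
        = 2^(ℓ+2) * |(j:ℝ)| + 2 + N := by
      field_simp
      ring
    rw [hexpand]
    have hexp5 : (2:ℝ)^(ℓ+5) = 8 * 2^(ℓ+2) := by ring
    have hpos : (0:ℝ) < 2^(ℓ+2) * |(j:ℝ)| := by positivity
    rw [hexp5]
    nlinarith
  calc (Nat.card {r : ℤ |
        (Set.Ioo ((r : ℝ) / (j : ℝ) - 1 / (|(j : ℝ)| * N))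
            ((r : ℝ) / (j : ℝ) + 1 / (|(j : ℝ)| * N)) ∩
          Set.Ico ((2:ℝ)^ℓ / N) ((2:ℝ)^(ℓ+1) / N)).Nonempty} : ℝ)
      ≤ (Nat.card (Set.Icc (-M) M : Set ℤ) : ℝ) := by exact_mod_cast hcard
    _ ≤ 2 * (|(j:ℝ)| * B') + 1 := hIcc
    _ ≤ 2 ^ (ℓ + 5) * |(j : ℝ)| / N := hfinal
end
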